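/- arXiv:1705.03647 — 5 statements merged into one kernel-verified Lean document; each statement's English description precedes it below -/
import Mathlib

section
/- Let d ≥ 2 and m ≥ 0 be integers, set D = Δ^d × ℝ_+^m ⊆ ℝ^{d+m}, and let p be a real polynomial in d+m variables of total degree at most n. If there is an index i ∈ {1,…,d+m} such that p(x) = 0 for every x ∈ D with x_i = 0, then there exists a real polynomial q in d+m variables of total degree at most n−1 such that p(x) = x_i q(x) for all x ∈ D. -/
/-!
With `j ≠ i` a simplex coordinate, the linear shear `x ↦ x + x_i (c e_j - e_i)`, where `c = 1` if
`i` is a simplex coordinate and `c = 0` otherwise, maps `D` into `D ∩ {x_i = 0}` and fixes the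
hyperplane `{x_i = 0}` pointwise. Hence `p - p ∘ shear` vanishes on that whole hyperplane, so it
is `X_i * q` with `deg q ≤ n - 1`; on `D` it equals `p`, because `p ∘ shear` vanishes there.
-/

open MvPolynomial Finset

namespace MvPolynomial

theorem totalDegree_aeval_le_of_totalDegree_le_one {σ τ R : Type*} [CommSemiring R]
    {s : σ → MvPolynomial τ R} (hs : ∀ k, (s k).totalDegree ≤ 1) (p : MvPolynomial σ R) :
    (aeval s p).totalDegree ≤ p.totalDegree := by
  conv_lhs => rw [p.as_sum, map_sum]
  refine (totalDegree_finsetSum _ _).trans (Finset.sup_le fun v hv => ?_)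
  rw [aeval_monomial, algebraMap_eq]
  refine (totalDegree_mul _ _).trans ?_
  rw [totalDegree_C, zero_add]
  calc (v.prod fun k e => s k ^ e).totalDegree
      ≤ ∑ k ∈ v.support, (s k ^ v k).totalDegree := totalDegree_finsetProd _ _
    _ ≤ ∑ k ∈ v.support, v k := Finset.sum_le_sum fun k _ =>
        (totalDegree_pow _ _).trans (by simpa using Nat.mul_le_mul_left (v k) (hs k))
    _ ≤ p.totalDegree := le_totalDegree hv

variable {σ R : Type*} [CommRing R] [IsDomain R]

theorem totalDegree_le_sub_one_of_X_mul {i : σ} {q : MvPolynomial σ R} {n : ℕ}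
    (h : (X i * q).totalDegree ≤ n) : q.totalDegree ≤ n - 1 := by
  rcases eq_or_ne q 0 with rfl | hq
  · simp
  rw [totalDegree_mul_of_isDomain (X_ne_zero i) hq, totalDegree_X] at h
  omega

theorem X_dvd_of_eval_eq_zero [Infinite R] {i : σ} {p : MvPolynomial σ R}
    (h : ∀ y : σ → R, y i = 0 → eval y p = 0) : X i ∣ p := by
  classical
  rw [X_dvd_iff_modMonomial_eq_zero]
  set r := p.modMonomial (Finsupp.single i 1)
  -- `r` does not involve `X i` and vanishes on `{y i = 0}`, hence everywhere.
  have hi : i ∉ r.vars := by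
    rw [mem_vars_iff_mem_support]
    rintro ⟨v, hv, hiv⟩
    refine mem_support_iff.mp hv (coeff_modMonomial_of_le p ?_)
    simpa [Finsupp.single_le_iff, Nat.one_le_iff_ne_zero] using hiv
  refine MvPolynomial.funext fun y => ?_
  have hr : eval (Function.update y i 0) r = 0 := by
    have := congrArg (eval (Function.update y i 0)) (divMonomial_add_modMonomial_single p i)
    simpa [h _ (Function.update_self i 0 y)] using this
  rw [map_zero, ← hr]
  refine hom_congr_vars (by ext; simp) (fun k hk _ => ?_) rfl
  rw [eval_X, eval_X, Function.update_of_ne (ne_of_mem_of_not_mem hk hi)]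

theorem exists_eq_X_mul_on_of_add_smul_mem [Infinite R] {D : Set (σ → R)}
    {p : MvPolynomial σ R} {i : σ} (a : σ → R) (ha : a i = -1)
    (hD : ∀ x ∈ D, x + x i • a ∈ D) (hvanish : ∀ x ∈ D, x i = 0 → eval x p = 0) :
    ∃ q : MvPolynomial σ R, q.totalDegree ≤ p.totalDegree - 1 ∧
      ∀ x ∈ D, eval x p = x i * eval x q := by
  set s : σ → MvPolynomial σ R := fun k => X k + C (a k) * X i
  have hs : ∀ k, (s k).totalDegree ≤ 1 := fun k =>
    (totalDegree_add _ _).trans <| max_le (totalDegree_X k).le <|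
      (totalDegree_mul _ _).trans (by simp [totalDegree_X])
  have eval_aeval_s : ∀ y, eval y (aeval s p) = eval (y + y i • a) p := by
    intro y
    calc eval y (aeval s p) = eval (fun k => eval y (s k)) p := by
          rw [aeval_eq_bind₁]; exact eval₂Hom_bind₁ _ _ _ _
      _ = eval (y + y i • a) p := by
          congr 2
          funext k
          simp [s, mul_comm]
  obtain ⟨q, hq⟩ : X i ∣ p - aeval s p :=
    X_dvd_of_eval_eq_zero fun y hy => by
      rw [map_sub, eval_aeval_s, hy, zero_smul, add_zero, sub_self]
  refine ⟨q, totalDegree_le_sub_one_of_X_mul (i := i) ?_, fun x hx => ?_⟩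
  · rw [← hq]
    exact (totalDegree_sub _ _).trans
      (max_le le_rfl (totalDegree_aeval_le_of_totalDegree_le_one hs p))
  · have := congrArg (eval x) hq
    rwa [map_sub, eval_aeval_s, hvanish _ (hD x hx) (by simp [ha]), sub_zero, map_mul,
      eval_X] at this

end MvPolynomial

def simplexProdOrthant {σ : Type*} [Fintype σ] (S : σ → Prop) [DecidablePred S] :
    Set (σ → ℝ) :=
  {x | (∀ k, 0 ≤ x k) ∧ (∀ k, S k → x k ≤ 1) ∧ ∑ k ∈ univ.filter S, x k = 1}

theorem add_smul_mem_simplexProdOrthant {σ : Type*} [Fintype σ] [DecidableEq σ]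
    {S : σ → Prop} [DecidablePred S] {x : σ → ℝ} (hx : x ∈ simplexProdOrthant S)
    {i j : σ} (hj : S j) (hji : j ≠ i) :
    x + x i • (Pi.single j (if S i then 1 else 0) - Pi.single i 1) ∈ simplexProdOrthant S := by
  obtain ⟨hnonneg, -, hsum⟩ := hx
  set y := x + x i • (Pi.single j (if S i then 1 else 0) - Pi.single i 1 : σ → ℝ)
  have hy_nonneg : ∀ k, 0 ≤ y k := by
    intro k
    by_cases hki : k = i
    · subst hki; simp [y, hji]
    · simp only [y, Pi.add_apply, Pi.smul_apply, Pi.sub_apply, Pi.single_apply, hki,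
        if_false, sub_zero, smul_eq_mul]
      split_ifs <;> nlinarith [hnonneg i, hnonneg k]
  have hy_sum : ∑ k ∈ univ.filter S, y k = 1 := by
    simp only [y, Pi.add_apply, Pi.smul_apply, Pi.sub_apply, smul_eq_mul, sum_add_distrib,
      ← mul_sum, sum_sub_distrib, sum_pi_single', mem_filter, mem_univ, true_and, hj, if_true]
    simp [hsum]
  refine ⟨hy_nonneg, fun k hk => ?_, hy_sum⟩
  rw [← hy_sum]
  exact single_le_sum (fun k _ => hy_nonneg k) (by simpa using hk)

/-- If a polynomial `p` of total degree at most `n` vanishes on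
`D ∩ {x_i = 0}`, where `D = Δ^d × ℝ_+^m`, then `p = x_i q` on `D` for some polynomial `q`
of total degree at most `n - 1`. -/
theorem statement1 (d m n : ℕ) (hd : 2 ≤ d)
    (D : Set (Fin (d + m) → ℝ))
    (hD : D = {x | (∀ k, 0 ≤ x k) ∧ (∀ k : Fin (d + m), (k : ℕ) < d → x k ≤ 1) ∧
        (∑ k ∈ Finset.univ.filter (fun k : Fin (d + m) => (k : ℕ) < d), x k) = 1})
    (p : MvPolynomial (Fin (d + m)) ℝ) (hp : p.totalDegree ≤ n)
    (i : Fin (d + m))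
    (hvanish : ∀ x ∈ D, x i = 0 → MvPolynomial.eval x p = 0) :
    ∃ q : MvPolynomial (Fin (d + m)) ℝ, q.totalDegree ≤ n - 1 ∧
      ∀ x ∈ D, MvPolynomial.eval x p = x i * MvPolynomial.eval x q := by
  subst hD
  obtain ⟨j, hjd, hji⟩ : ∃ j : Fin (d + m), (j : ℕ) < d ∧ j ≠ i := by
    by_cases hi : (i : ℕ) = 0
    · exact ⟨⟨1, by omega⟩, by simp; omega, fun h => by simp [← h] at hi⟩
    · exact ⟨⟨0, by omega⟩, by simp; omega, fun h => hi (by simp [← h])⟩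
  obtain ⟨q, hq, hpq⟩ := exists_eq_X_mul_on_of_add_smul_mem
    (D := simplexProdOrthant fun k : Fin (d + m) => (k : ℕ) < d) _ (by simp [hji])
    (fun x hx => add_smul_mem_simplexProdOrthant hx hjd hji) hvanish
  exact ⟨q, by omega, hpq⟩
end

section
/- Let d ≥ 2 and m ≥ 0 be integers, set D = Δ^d × ℝ_+^m ⊆ ℝ^{d+m}, and let p be a real polynomial in d+m variables of total degree at most n. If there are indices i ≠ j in {1,…,d+m} such that p(x) = 0 for every x ∈ D with x_i = 0 or x_j = 0, then there exists a real polynomial q in d+m variables of total degree at most n−2 such that p(x) = x_i x_j q(x) for all x ∈ D. -/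
open MvPolynomial Finset

lemma mv_zero_of_open {N : ℕ} (p : MvPolynomial (Fin N) ℝ) {U : Set (Fin N → ℝ)}
    (hU : IsOpen U) (hne : U.Nonempty) (h : ∀ x ∈ U, eval x p = 0) : p = 0 := by
  have hana : AnalyticOnNhd ℝ (fun x : Fin N → ℝ => eval x p) Set.univ :=
    AnalyticOnNhd.eval_continuousLinearMap (ContinuousLinearMap.id ℝ (Fin N → ℝ)) p
  obtain ⟨z₀, hz₀⟩ := hne
  have hev : (fun x : Fin N → ℝ => eval x p) =ᶠ[nhds z₀] 0 := by
    filter_upwards [hU.mem_nhds hz₀] with x hx using h x hx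
  have := hana.eqOn_zero_of_preconnected_of_eventuallyEq_zero
    isPreconnected_univ (Set.mem_univ z₀) hev
  apply MvPolynomial.funext (q := 0)
  intro x
  simpa using this (Set.mem_univ x)

lemma X_dvd_of_subst_zero {N : ℕ} (i : Fin N) (p : MvPolynomial (Fin N) ℝ)
    (h : aeval (Function.update X i (0 : MvPolynomial (Fin N) ℝ)) p = 0) :
    ∃ r, p = X i * r := by
  have key : ∀ p : MvPolynomial (Fin N) ℝ, ∃ r,
      p = aeval (Function.update X i (0 : MvPolynomial (Fin N) ℝ)) p + X i * r := by
    intro p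
    induction p using MvPolynomial.induction_on with
    | C a => exact ⟨0, by simp⟩
    | add p q hp hq =>
      obtain ⟨r, hr⟩ := hp; obtain ⟨s, hs⟩ := hq
      exact ⟨r + s, by rw [map_add]; linear_combination hr + hs⟩
    | mul_X p k hp =>
      obtain ⟨r, hr⟩ := hp
      by_cases hk : k = i
      · subst hk
        exact ⟨p, by simp [Function.update_self, mul_comm]⟩
      · refine ⟨r * X k, ?_⟩
        rw [map_mul, aeval_X, Function.update_of_ne hk]
        linear_combination (X k : MvPolynomial (Fin N) ℝ) * hr
  obtain ⟨r, hr⟩ := key p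
  exact ⟨r, by rw [hr, h, zero_add]⟩

lemma deg_of_X_mul {N : ℕ} (i : Fin N) (p r : MvPolynomial (Fin N) ℝ)
    (h : p = X i * r) : r.totalDegree ≤ p.totalDegree - 1 := by
  rcases eq_or_ne r 0 with rfl | hr
  · simp
  have hsupp : r.support.Nonempty := support_nonempty.mpr hr
  obtain ⟨s, hs, hdeg⟩ := Finset.exists_mem_eq_sup r.support hsupp
    (fun s => s.sum fun _ e => e)
  have hc : coeff (Finsupp.single i 1 + s) p ≠ 0 := by
    rw [h, coeff_X_mul]
    exact mem_support_iff.mp hs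
  have hle : ((Finsupp.single i 1 + s).sum fun _ e => e) ≤ p.totalDegree :=
    le_totalDegree (mem_support_iff.mpr hc)
  rw [Finsupp.sum_add_index (by simp) (by intros; rfl)] at hle
  simp [Finsupp.sum_single_index] at hle
  have hts : r.totalDegree = s.sum fun _ e => e := hdeg
  omega

lemma totalDegree_aeval_le {N : ℕ} (f : Fin N → MvPolynomial (Fin N) ℝ)
    (hf : ∀ k, (f k).totalDegree ≤ 1) (p : MvPolynomial (Fin N) ℝ) :
    (aeval f p).totalDegree ≤ p.totalDegree := by
  conv_lhs => rw [p.as_sum, map_sum]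
  refine (totalDegree_finset_sum _ _).trans (Finset.sup_le fun s hs => ?_)
  rw [aeval_monomial]
  refine (totalDegree_mul _ _).trans ?_
  have h1 : (algebraMap ℝ (MvPolynomial (Fin N) ℝ) (coeff s p)).totalDegree = 0 :=
    totalDegree_C _
  rw [h1, zero_add]
  have h2 : (s.prod fun k e => f k ^ e).totalDegree ≤ s.sum fun _ e => e := by
    rw [Finsupp.prod]
    refine (totalDegree_finset_prod _ _).trans ?_
    rw [Finsupp.sum]
    refine Finset.sum_le_sum fun k hk => ?_
    refine (totalDegree_pow _ _).trans ?_
    calc s k * (f k).totalDegree ≤ s k * 1 := Nat.mul_le_mul_left _ (hf k)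
      _ = s k := Nat.mul_one _
  exact h2.trans (le_totalDegree hs)

lemma eval_aeval' {N : ℕ} (x : Fin N → ℝ) (f : Fin N → MvPolynomial (Fin N) ℝ)
    (p : MvPolynomial (Fin N) ℝ) :
    eval x (aeval f p) = eval (fun k => eval x (f k)) p := by
  induction p using MvPolynomial.induction_on with
  | C a => simp
  | add p q hp hq => simp only [map_add, hp, hq]
  | mul_X p k hp => simp only [map_mul, aeval_X, eval_X, hp]

lemma eval_subst_zero {N : ℕ} (a : Fin N) (s : MvPolynomial (Fin N) ℝ) (x : Fin N → ℝ) :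
    eval x (aeval (Function.update X a (0 : MvPolynomial (Fin N) ℝ)) s)
      = eval (Function.update x a 0) s := by
  have hfun : (fun k => eval x (Function.update X a (0 : MvPolynomial (Fin N) ℝ) k))
      = Function.update x a 0 := by
    funext k
    by_cases h : k = a
    · subst h; simp
    · simp [Function.update_of_ne h]
  rw [eval_aeval', hfun]

/-- If a polynomial `p` of total degree at most `n` vanishes on
`D ∩ ({x_i = 0} ∪ {x_j = 0})`, where `D = Δ^d × ℝ_+^m` and `i ≠ j`, then `p = x_i x_j q`
on `D` for some polynomial `q` of total degree at most `n - 2`. -/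
theorem statement2 (d m n : ℕ) (hd : 2 ≤ d)
    (D : Set (Fin (d + m) → ℝ))
    (hD : D = {x | (∀ k, 0 ≤ x k) ∧ (∀ k : Fin (d + m), (k : ℕ) < d → x k ≤ 1) ∧
        (∑ k ∈ Finset.univ.filter (fun k : Fin (d + m) => (k : ℕ) < d), x k) = 1})
    (p : MvPolynomial (Fin (d + m)) ℝ) (hp : p.totalDegree ≤ n)
    (i j : Fin (d + m)) (hij : i ≠ j)
    (hvanish : ∀ x ∈ D, (x i = 0 ∨ x j = 0) → MvPolynomial.eval x p = 0) :
    ∃ q : MvPolynomial (Fin (d + m)) ℝ, q.totalDegree ≤ n - 2 ∧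
      ∀ x ∈ D, MvPolynomial.eval x p = x i * x j * MvPolynomial.eval x q := by
  classical
  subst hD
  set S : Finset (Fin (d + m)) := Finset.univ.filter (fun k : Fin (d + m) => (k : ℕ) < d)
    with hSdef
  have hmemS : ∀ k : Fin (d + m), k ∈ S ↔ (k : ℕ) < d := by
    intro k; simp [hSdef]
  -- the small box
  have hdm2 : 2 ≤ d + m := by omega
  have hdmR : (2 : ℝ) ≤ ((d + m : ℕ) : ℝ) := by exact_mod_cast hdm2
  set δ : ℝ := ((2 : ℝ) * ((d + m : ℕ) : ℝ))⁻¹ with hδdef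
  have hδpos : 0 < δ := by
    rw [hδdef]; positivity
  have hδle1 : δ ≤ 1 := by
    rw [hδdef]
    rw [inv_le_one_iff₀]
    right; nlinarith
  set U : Set (Fin (d + m) → ℝ) := Set.univ.pi (fun _ => Set.Ioo (0 : ℝ) δ) with hUdef
  have hUopen : IsOpen U := isOpen_set_pi Set.finite_univ (fun _ _ => isOpen_Ioo)
  have hUne : U.Nonempty := by
    refine ⟨fun _ => δ / 2, ?_⟩
    rw [hUdef]
    intro k _
    constructor <;> nlinarith
  have hUmem : ∀ x ∈ U, ∀ k, 0 < x k ∧ x k < δ := by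
    intro x hx k
    have := hx k (Set.mem_univ k)
    exact ⟨this.1, this.2⟩
  -- sum bound over small coordinates
  have hsum_le : ∀ (k0 : Fin (d + m)) (z : Fin (d + m) → ℝ),
      (∀ k, 0 ≤ z k) → (∀ k, z k ≤ δ) → (∑ l ∈ S.erase k0, z l) ≤ 1 := by
    intro k0 z hz0 hzδ
    have h1 : (∑ l ∈ S.erase k0, z l) ≤ (S.erase k0).card • δ :=
      Finset.sum_le_card_nsmul _ _ _ (fun l _ => hzδ l)
    have hcard : (S.erase k0).card ≤ d + m := by
      calc (S.erase k0).card ≤ (Finset.univ : Finset (Fin (d + m))).card :=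
            Finset.card_le_card (Finset.subset_univ _)
        _ = d + m := by simp
    have h2 : ((S.erase k0).card : ℝ) * δ ≤ ((d + m : ℕ) : ℝ) * δ := by
      apply mul_le_mul_of_nonneg_right _ hδpos.le
      exact_mod_cast hcard
    have h3 : ((d + m : ℕ) : ℝ) * δ ≤ 1 := by
      rw [hδdef]
      rw [mul_inv]
      have hne : ((d + m : ℕ) : ℝ) ≠ 0 := by positivity
      calc ((d + m : ℕ) : ℝ) * ((2:ℝ)⁻¹ * ((d + m : ℕ) : ℝ)⁻¹)
          = (2:ℝ)⁻¹ * (((d + m : ℕ) : ℝ) * ((d + m : ℕ) : ℝ)⁻¹) := by ring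
        _ = (2:ℝ)⁻¹ := by rw [mul_inv_cancel₀ hne, mul_one]
        _ ≤ 1 := by norm_num
    calc (∑ l ∈ S.erase k0, z l) ≤ (S.erase k0).card • δ := h1
      _ = ((S.erase k0).card : ℝ) * δ := nsmul_eq_mul _ _
      _ ≤ 1 := h2.trans h3
  -- membership of the reconstructed point
  have hYD : ∀ (k0 : Fin (d + m)), (k0 : ℕ) < d → ∀ z : Fin (d + m) → ℝ,
      (∀ k, 0 ≤ z k) → (∀ k : Fin (d + m), (k : ℕ) < d → z k ≤ 1) →
      (∑ l ∈ S.erase k0, z l) ≤ 1 →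
      Function.update z k0 (1 - ∑ l ∈ S.erase k0, z l) ∈
        {x : Fin (d+m) → ℝ | (∀ k, 0 ≤ x k) ∧ (∀ k : Fin (d + m), (k : ℕ) < d → x k ≤ 1) ∧
          (∑ k ∈ Finset.univ.filter (fun k : Fin (d + m) => (k : ℕ) < d), x k) = 1} := by
    intro k0 hk0 z hz0 hz1 hT1
    have hk0S : k0 ∈ S := (hmemS k0).2 hk0
    have hT0 : 0 ≤ ∑ l ∈ S.erase k0, z l :=
      Finset.sum_nonneg (fun l _ => hz0 l)
    refine ⟨?_, ?_, ?_⟩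
    · intro k
      by_cases hk : k = k0
      · subst hk; rw [Function.update_self]; linarith
      · rw [Function.update_of_ne hk]; exact hz0 k
    · intro k hkd
      by_cases hk : k = k0
      · subst hk; rw [Function.update_self]; linarith
      · rw [Function.update_of_ne hk]; exact hz1 k hkd
    · rw [← hSdef]
      rw [← Finset.add_sum_erase S _ hk0S]
      rw [Function.update_self]
      have : ∀ l ∈ S.erase k0, Function.update z k0 (1 - ∑ l ∈ S.erase k0, z l) l = z l := by
        intro l hl
        exact Function.update_of_ne (Finset.ne_of_mem_erase hl) _ _
      rw [Finset.sum_congr rfl this]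
      ring
  -- reconstructed point is `x` itself on `D`
  have hYfix : ∀ (k0 : Fin (d + m)), k0 ∈ S → ∀ x : Fin (d+m) → ℝ,
      (∑ k ∈ Finset.univ.filter (fun k : Fin (d + m) => (k : ℕ) < d), x k) = 1 →
      Function.update x k0 (1 - ∑ l ∈ S.erase k0, x l) = x := by
    intro k0 hk0S x hx
    rw [← hSdef] at hx
    have h1 : x k0 + ∑ l ∈ S.erase k0, x l = 1 := by
      rw [Finset.add_sum_erase S x hk0S]; exact hx
    have h2 : 1 - ∑ l ∈ S.erase k0, x l = x k0 := by linarith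
    rw [h2, Function.update_eq_self]
  -- THE MAIN ENGINE : first division
  have main : ∀ k0 : Fin (d + m), (k0 : ℕ) < d → k0 ≠ i →
      ∃ r : MvPolynomial (Fin (d + m)) ℝ, r.totalDegree ≤ n - 1 ∧
        ∀ z : Fin (d + m) → ℝ,
          z i * eval z r = eval (Function.update z k0 (1 - ∑ l ∈ S.erase k0, z l)) p := by
    intro k0 hk0d hk0i
    set f : Fin (d + m) → MvPolynomial (Fin (d + m)) ℝ :=
      Function.update X k0 (1 - ∑ l ∈ S.erase k0, X l) with hfdef
    have hfdeg : ∀ k, (f k).totalDegree ≤ 1 := by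
      intro k
      by_cases hk : k = k0
      · rw [hk, hfdef, Function.update_self, sub_eq_add_neg]
        refine (totalDegree_add _ _).trans (max_le (by simp) ?_)
        have hneg : (-(∑ l ∈ S.erase k0, X l) : MvPolynomial (Fin (d+m)) ℝ)
            = (-1 : ℝ) • (∑ l ∈ S.erase k0, X l) := by
          rw [neg_one_smul]
        rw [hneg]
        refine (totalDegree_smul_le _ _).trans ?_
        refine (totalDegree_finset_sum _ _).trans (Finset.sup_le fun l _ => ?_)
        rw [totalDegree_X]
      · rw [hfdef, Function.update_of_ne hk]
        rw [totalDegree_X]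
    set p' : MvPolynomial (Fin (d + m)) ℝ := aeval f p with hp'def
    have hp'deg : p'.totalDegree ≤ n := (totalDegree_aeval_le f hfdeg p).trans hp
    have heval' : ∀ z : Fin (d + m) → ℝ,
        eval z p' = eval (Function.update z k0 (1 - ∑ l ∈ S.erase k0, z l)) p := by
      intro z
      rw [hp'def, eval_aeval']
      have hfun : (fun k => eval z (f k))
          = Function.update z k0 (1 - ∑ l ∈ S.erase k0, z l) := by
        funext k
        by_cases hk : k = k0
        · subst hk
          rw [hfdef, Function.update_self, Function.update_self]
          rw [map_sub, map_one, map_sum]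
          simp
        · rw [hfdef, Function.update_of_ne hk, Function.update_of_ne hk, eval_X]
      rw [hfun]
    -- p' vanishes with x_i set to 0
    have hvan : aeval (Function.update X i (0 : MvPolynomial (Fin (d+m)) ℝ)) p' = 0 := by
      apply mv_zero_of_open _ hUopen hUne
      intro x hx
      rw [eval_subst_zero]
      rw [heval' (Function.update x i 0)]
      set z : Fin (d+m) → ℝ := Function.update x i 0 with hzdef
      have hz0 : ∀ k, 0 ≤ z k := by
        intro k
        by_cases hk : k = i
        · subst hk; rw [hzdef, Function.update_self]
        · rw [hzdef, Function.update_of_ne hk]; exact (hUmem x hx k).1.le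
      have hzδ : ∀ k, z k ≤ δ := by
        intro k
        by_cases hk : k = i
        · subst hk; rw [hzdef, Function.update_self]; exact hδpos.le
        · rw [hzdef, Function.update_of_ne hk]; exact (hUmem x hx k).2.le
      apply hvanish
      · exact hYD k0 hk0d z hz0 (fun k _ => (hzδ k).trans hδle1) (hsum_le k0 z hz0 hzδ)
      · left
        rw [Function.update_of_ne (Ne.symm hk0i)]
        rw [hzdef, Function.update_self]
    obtain ⟨r, hr⟩ := X_dvd_of_subst_zero i p' hvan
    refine ⟨r, ?_, ?_⟩
    · have := deg_of_X_mul i p' r hr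
      omega
    · intro z
      have : eval z p' = z i * eval z r := by rw [hr, map_mul, eval_X]
      rw [← this, heval' z]
  by_cases hex : ∃ k0 : Fin (d + m), (k0 : ℕ) < d ∧ k0 ≠ i ∧ k0 ≠ j
  · -- CASE A: a third simplex coordinate exists
    obtain ⟨k0, hk0d, hk0i, hk0j⟩ := hex
    obtain ⟨r, hrdeg, hr⟩ := main k0 hk0d hk0i
    have hvan2 : aeval (Function.update X j (0 : MvPolynomial (Fin (d+m)) ℝ)) r = 0 := by
      apply mv_zero_of_open _ hUopen hUne
      intro x hx
      rw [eval_subst_zero]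
      set z : Fin (d+m) → ℝ := Function.update x j 0 with hzdef
      have hz0 : ∀ k, 0 ≤ z k := by
        intro k
        by_cases hk : k = j
        · rw [hk, hzdef, Function.update_self]
        · rw [hzdef, Function.update_of_ne hk]; exact (hUmem x hx k).1.le
      have hzδ : ∀ k, z k ≤ δ := by
        intro k
        by_cases hk : k = j
        · rw [hk, hzdef, Function.update_self]; exact hδpos.le
        · rw [hzdef, Function.update_of_ne hk]; exact (hUmem x hx k).2.le
      have hpz : eval (Function.update z k0 (1 - ∑ l ∈ S.erase k0, z l)) p = 0 := by
        apply hvanish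
        · exact hYD k0 hk0d z hz0 (fun k _ => (hzδ k).trans hδle1) (hsum_le k0 z hz0 hzδ)
        · right
          rw [Function.update_of_ne (Ne.symm hk0j)]
          rw [hzdef, Function.update_self]
      have h0 : z i * eval z r = 0 := (hr z).trans hpz
      have hzi : z i = x i := by rw [hzdef, Function.update_of_ne hij]
      have hxi : 0 < x i := (hUmem x hx i).1
      rcases mul_eq_zero.mp h0 with h | h
      · exfalso; rw [hzi] at h; linarith
      · exact h
    obtain ⟨q, hq⟩ := X_dvd_of_subst_zero j r hvan2
    refine ⟨q, ?_, ?_⟩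
    · have := deg_of_X_mul j r q hq
      omega
    · intro x hxD
      obtain ⟨hx0, hx1, hxs⟩ := hxD
      have hfix := hYfix k0 ((hmemS k0).2 hk0d) x hxs
      have h := hr x
      rw [hfix] at h
      rw [← h, hq, map_mul, eval_X]
      ring
  · -- CASE B: d = 2 and {i, j} are the simplex coordinates
    push_neg at hex
    have hzerod : (0 : ℕ) < d := by omega
    have honed : (1 : ℕ) < d := by omega
    set a : Fin (d + m) := ⟨0, by omega⟩ with hadef
    set b : Fin (d + m) := ⟨1, by omega⟩ with hbdef
    have hab : a ≠ b := by
      rw [hadef, hbdef]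
      simp [Fin.ext_iff]
    have hmema : a = i ∨ a = j := by
      by_cases h : a = i
      · exact Or.inl h
      · exact Or.inr (hex a (by rw [hadef]; exact hzerod) h)
    have hmemb : b = i ∨ b = j := by
      by_cases h : b = i
      · exact Or.inl h
      · exact Or.inr (hex b (by rw [hbdef]; exact honed) h)
    have hid : (i : ℕ) < d ∧ (j : ℕ) < d := by
      rcases hmema with ha | ha <;> rcases hmemb with hb | hb
      · exact absurd (ha.trans hb.symm) hab
      · rw [← ha, ← hb]; exact ⟨hzerod, honed⟩
      · rw [← ha, ← hb]; exact ⟨honed, hzerod⟩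
      · exact absurd (ha.trans hb.symm) hab
    have hjd : (j : ℕ) < d := hid.2
    have hSij : S = {i, j} := by
      ext k
      rw [hmemS k]
      constructor
      · intro hk
        by_cases h : k = i
        · simp [h]
        · simp [hex k hk h]
      · intro hk
        rcases Finset.mem_insert.mp hk with h | h
        · rw [h]; exact hid.1
        · rw [Finset.mem_singleton.mp h]; exact hjd
    have hSej : S.erase j = {i} := by
      rw [hSij]
      ext k
      rw [Finset.mem_erase, Finset.mem_singleton]
      constructor
      · rintro ⟨hkj, hk⟩
        rcases Finset.mem_insert.mp hk with h | h
        · exact h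
        · exact absurd (Finset.mem_singleton.mp h) hkj
      · intro h
        exact ⟨h ▸ hij, by simp [h]⟩
    have hsumi : ∀ z : Fin (d + m) → ℝ, (∑ l ∈ S.erase j, z l) = z i := by
      intro z
      rw [hSej, Finset.sum_singleton]
    obtain ⟨r, hrdeg, hr⟩ := main j hjd (Ne.symm hij)
    -- second division : by (1 - X i)
    set g : Fin (d + m) → MvPolynomial (Fin (d + m)) ℝ :=
      Function.update X i (1 - X i) with hgdef
    have hgdeg : ∀ k, (g k).totalDegree ≤ 1 := by
      intro k
      by_cases hk : k = i
      · rw [hk, hgdef, Function.update_self, sub_eq_add_neg]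
        refine (totalDegree_add _ _).trans (max_le (by simp) ?_)
        have hneg : (-(X i) : MvPolynomial (Fin (d+m)) ℝ) = (-1 : ℝ) • (X i) := by
          rw [neg_one_smul]
        rw [hneg]
        exact (totalDegree_smul_le _ _).trans (totalDegree_X i).le
      · rw [hgdef, Function.update_of_ne hk, totalDegree_X]
    have hvan3 : aeval (Function.update X i (0 : MvPolynomial (Fin (d+m)) ℝ))
        (aeval g r) = 0 := by
      apply mv_zero_of_open _ hUopen hUne
      intro x hx
      rw [eval_subst_zero, eval_aeval']
      have hfun : (fun k => eval (Function.update x i 0) (g k))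
          = Function.update x i 1 := by
        funext k
        by_cases hk : k = i
        · rw [hk, hgdef, Function.update_self, Function.update_self]
          rw [map_sub, map_one, eval_X, Function.update_self]
          norm_num
        · rw [hgdef, Function.update_of_ne hk, Function.update_of_ne hk, eval_X,
            Function.update_of_ne hk]
      rw [hfun]
      set z : Fin (d+m) → ℝ := Function.update x i 1 with hzdef
      have hzi : z i = 1 := by rw [hzdef, Function.update_self]
      have hz0 : ∀ k, 0 ≤ z k := by
        intro k
        by_cases hk : k = i
        · rw [hk, hzi]; norm_num
        · rw [hzdef, Function.update_of_ne hk]; exact (hUmem x hx k).1.le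
      have hz1 : ∀ k : Fin (d + m), (k : ℕ) < d → z k ≤ 1 := by
        intro k hkd
        by_cases hk : k = i
        · rw [hk, hzi]
        · have hkj : k = j := hex k hkd hk
          rw [hzdef, Function.update_of_ne hk]
          exact ((hUmem x hx k).2.le).trans hδle1
      have hT1 : (∑ l ∈ S.erase j, z l) ≤ 1 := by
        rw [hsumi z, hzi]
      have hpz : eval (Function.update z j (1 - ∑ l ∈ S.erase j, z l)) p = 0 := by
        apply hvanish
        · exact hYD j hjd z hz0 hz1 hT1
        · right
          rw [Function.update_self, hsumi z, hzi]
          norm_num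
      have h0 : z i * eval z r = 0 := (hr z).trans hpz
      rw [hzi, one_mul] at h0
      exact h0
    obtain ⟨u, hu⟩ := X_dvd_of_subst_zero i (aeval g r) hvan3
    have hudeg : u.totalDegree ≤ n - 2 := by
      have h1 : (aeval g r).totalDegree ≤ n - 1 :=
        (totalDegree_aeval_le g hgdeg r).trans hrdeg
      have h2 := deg_of_X_mul i (aeval g r) u hu
      omega
    have hinv : ∀ s : MvPolynomial (Fin (d + m)) ℝ, aeval g (aeval g s) = s := by
      intro s
      rw [comp_aeval_apply]
      have hfun : (fun k => aeval g (g k)) = (X : Fin (d+m) → MvPolynomial (Fin (d+m)) ℝ) := by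
        funext k
        by_cases hk : k = i
        · rw [hk, hgdef, Function.update_self, map_sub, map_one, aeval_X,
            Function.update_self]
          ring
        · rw [hgdef, Function.update_of_ne hk, aeval_X, Function.update_of_ne hk]
      rw [hfun, aeval_X_left_apply]
    have hqr : r = (1 - X i) * aeval g u := by
      have h1 : r = aeval g (aeval g r) := (hinv r).symm
      rw [h1, hu, map_mul, aeval_X, hgdef, Function.update_self]
    refine ⟨aeval g u, ?_, ?_⟩
    · exact (totalDegree_aeval_le g hgdeg u).trans hudeg
    · intro x hxD
      obtain ⟨hx0, hx1, hxs⟩ := hxD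
      have hfix := hYfix j ((hmemS j).2 hjd) x hxs
      have h := hr x
      rw [hfix] at h
      have hxs' : x i + x j = 1 := by
        rw [hSij, Finset.sum_pair hij] at hxs
        exact hxs
      rw [← h, hqr, map_mul, map_sub, map_one, eval_X]
      have : (1 : ℝ) - x i = x j := by linarith
      rw [this]
      ring
end

section
/- Let d ≥ 2, m ≥ 1, D = Δ^d × ℝ_+^m ⊆ ℝ^{d+m}, I = {1,…,d}, J = {d+1,…,d+m}. Let c : ℝ^{d+m} → S^{d+m} be a symmetric-matrix-valued map such that for all k ≠ l one has c_{kl}(x) = −γ_{kl} x_k x_l for some real numbers γ_{kl} = γ_{lk}, for each i ∈ I one has c_{ii}(x) = Σ_{k∈I, k≠i} γ_{ik} x_i x_k, and for each j ∈ J one has c_{jj}(x) = α_{jj} x_j² + x_j (φ_j + θ_{(j)}^⊤ x_I + π_{(j)}^⊤ x_J) for some α_{jj}, φ_j ∈ ℝ, θ_{(j)} ∈ ℝ^d, π_{(j)} ∈ ℝ^m. If c(x) is positive semidefinite for every x ∈ D, then γ_{ij} = 0 for every i ∈ I and j ∈ J. -/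
open Matrix Finset

/-!
At the point `x = e_i + e_j` of `D` (vertex `i` of the simplex, `x_j = 1`) every term of the
diagonal entry `c_{ii}(x) = Σ_{k ≠ i} γ_{ik} x_i x_k` vanishes, while `c_{ij}(x) = -γ_{ij}`.
A positive semidefinite matrix with a zero diagonal entry has zero row there, since its
principal `2 × 2` minors are nonnegative.
-/

namespace Matrix.PosSemidef

variable {n : Type*} {A : Matrix n n ℝ}

theorem sq_apply_le_mul_apply_diag (hA : A.PosSemidef) (i j : n) :
    A i j ^ 2 ≤ A i i * A j j := by
  classical
  have hminor := (hA.submatrix ![i, j]).det_nonneg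
  have hsymm : A j i = A i j := hA.isHermitian.apply i j
  rw [det_fin_two] at hminor
  simp only [submatrix_apply, Matrix.cons_val_zero, Matrix.cons_val_one, hsymm] at hminor
  nlinarith

theorem apply_eq_zero_of_diag_eq_zero (hA : A.PosSemidef) {i : n} (hi : A i i = 0) (j : n) :
    A i j = 0 := by
  have h := hA.sq_apply_le_mul_apply_diag i j
  rw [hi, zero_mul] at h
  exact pow_eq_zero_iff two_ne_zero |>.mp (le_antisymm h (sq_nonneg _))

end Matrix.PosSemidef

theorem statement4_general (d m : ℕ)
    (D : Set ((Fin d ⊕ Fin m) → ℝ))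
    (hD : D = {x | (∀ k, 0 ≤ x k) ∧ (∀ i : Fin d, x (Sum.inl i) ≤ 1) ∧
        (∑ i : Fin d, x (Sum.inl i)) = 1})
    (γ : (Fin d ⊕ Fin m) → (Fin d ⊕ Fin m) → ℝ)
    (c : ((Fin d ⊕ Fin m) → ℝ) → Matrix (Fin d ⊕ Fin m) (Fin d ⊕ Fin m) ℝ)
    (hcoff : ∀ x (k l : Fin d ⊕ Fin m), k ≠ l → c x k l = -(γ k l * x k * x l))
    (hcI : ∀ x (i : Fin d),
      c x (Sum.inl i) (Sum.inl i) =
        ∑ k ∈ Finset.univ.erase i, γ (Sum.inl i) (Sum.inl k) * x (Sum.inl i) * x (Sum.inl k))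
    (hPSD : ∀ x ∈ D, (c x).PosSemidef) :
    ∀ (i : Fin d) (j : Fin m), γ (Sum.inl i) (Sum.inr j) = 0 := by
  intro i j
  set x : (Fin d ⊕ Fin m) → ℝ := Sum.elim (Pi.single i 1) (Pi.single j 1)
  have hxD : x ∈ D := by
    subst hD
    refine ⟨?_, fun k => ?_, by simp [x]⟩
    · rintro (k | k) <;> simp only [x, Sum.elim_inl, Sum.elim_inr, Pi.single_apply] <;>
        split_ifs <;> norm_num
    · simp only [x, Sum.elim_inl, Pi.single_apply]
      split_ifs <;> norm_num
  have hdiag : c x (Sum.inl i) (Sum.inl i) = 0 := by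
    rw [hcI]
    refine Finset.sum_eq_zero fun k hk => ?_
    simp [x, (Finset.mem_erase.mp hk).1]
  have hentry := (hPSD x hxD).apply_eq_zero_of_diag_eq_zero hdiag (Sum.inr j)
  rw [hcoff x _ _ Sum.inl_ne_inr] at hentry
  simpa [x] using hentry

/-- for a symmetric matrix map `c` of the given parametric form, positive
semidefiniteness of `c(x)` on `D = Δ^d × ℝ_+^m` forces `γ_{ij} = 0` for all `i ∈ I`,
`j ∈ J`. Coordinates are indexed by `Fin d ⊕ Fin m` (`Sum.inl` is `I`, `Sum.inr` is `J`). -/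
theorem statement4 (d m : ℕ) (hd : 2 ≤ d) (hm : 1 ≤ m)
    (D : Set ((Fin d ⊕ Fin m) → ℝ))
    (hD : D = {x | (∀ k, 0 ≤ x k) ∧ (∀ i : Fin d, x (Sum.inl i) ≤ 1) ∧
        (∑ i : Fin d, x (Sum.inl i)) = 1})
    (γ : (Fin d ⊕ Fin m) → (Fin d ⊕ Fin m) → ℝ)
    (hγsymm : ∀ k l, γ k l = γ l k)
    (α : Fin m → ℝ) (φ : Fin m → ℝ) (θ : Fin m → Fin d → ℝ) (π : Fin m → Fin m → ℝ)
    (c : ((Fin d ⊕ Fin m) → ℝ) → Matrix (Fin d ⊕ Fin m) (Fin d ⊕ Fin m) ℝ)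
    (hsymm : ∀ x, (c x).IsSymm)
    (hcoff : ∀ x (k l : Fin d ⊕ Fin m), k ≠ l → c x k l = -(γ k l * x k * x l))
    (hcI : ∀ x (i : Fin d),
      c x (Sum.inl i) (Sum.inl i) =
        ∑ k ∈ Finset.univ.erase i, γ (Sum.inl i) (Sum.inl k) * x (Sum.inl i) * x (Sum.inl k))
    (hcJ : ∀ x (j : Fin m),
      c x (Sum.inr j) (Sum.inr j) =
        α j * (x (Sum.inr j)) ^ 2 +
          x (Sum.inr j) * (φ j + (∑ i : Fin d, θ j i * x (Sum.inl i)) +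
            (∑ k : Fin m, π j k * x (Sum.inr k))))
    (hPSD : ∀ x ∈ D, (c x).PosSemidef) :
    ∀ (i : Fin d) (j : Fin m), γ (Sum.inl i) (Sum.inr j) = 0 :=
  statement4_general d m D hD γ c hcoff hcI hPSD
end

section
/- Let d ≥ 2 and let γ ∈ ℝ^{d×d} be symmetric with zero diagonal and with γ_{ij} > 0 for all i ≠ j. Then for every x in the interior Δ̊^d of the unit simplex, the (d−1)×(d−1) matrix c̃(x), obtained from c(x) by deleting the d-th row and column, is positive definite, and the matrix c(x) has rank d−1. -/
/-!
With weights `w i j = γ i j * x i * x j`, positive off the diagonal on the open simplex, `c x` is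
the weighted Laplacian `D - W` of the complete graph, whose quadratic form is
`½ ∑ᵢ ∑ⱼ w i j (v i - v j)²`. This form is nonnegative and vanishes exactly on the constant
vectors, so the kernel of `c x` is the line of constants (rank `d - 1`), and on vectors whose
last coordinate is zero it is positive away from 0.
-/

open Matrix

namespace Matrix

variable {ι κ R : Type*}

theorem weight_mul_sq_sub_nonneg {w : ι → ι → ℝ} (hnonneg : ∀ i j, i ≠ j → 0 ≤ w i j)
    (v : ι → ℝ) (i j : ι) : 0 ≤ w i j * (v i - v j) ^ 2 := by
  obtain rfl | hij := eq_or_ne i j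
  · simp
  · exact mul_nonneg (hnonneg i j hij) (sq_nonneg _)

variable [Fintype ι]

theorem dotProduct_submatrix_mulVec [CommSemiring R] [Fintype κ] (A : Matrix ι ι R) {e : κ → ι}
    (he : Function.Injective e) (v : κ → R) :
    v ⬝ᵥ A.submatrix e e *ᵥ v = Function.extend e v 0 ⬝ᵥ A *ᵥ Function.extend e v 0 := by
  have hzero : ∀ i ∉ Set.range e, Function.extend e v 0 i = 0 := fun i hi ↦ by
    rw [Function.extend_apply' _ _ _ (by simpa using hi), Pi.zero_apply]
  simp only [dotProduct, mulVec, submatrix_apply]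
  refine Fintype.sum_of_injective e he _ _ (fun i hi ↦ by rw [hzero i hi, zero_mul]) fun k ↦ ?_
  rw [he.extend_apply]
  congr 1
  exact Fintype.sum_of_injective e he _ _ (fun j hj ↦ by rw [hzero j hj, mul_zero])
    fun l ↦ by rw [he.extend_apply]

variable [DecidableEq ι]

def weightedLaplacian [Ring R] (w : ι → ι → R) : Matrix ι ι R :=
  diagonal (fun i ↦ ∑ j, w i j) - of w

theorem weightedLaplacian_mulVec [Ring R] (w : ι → ι → R) (v : ι → R) (i : ι) :
    (weightedLaplacian w *ᵥ v) i = ∑ j, w i j * (v i - v j) := by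
  rw [weightedLaplacian, sub_mulVec, Pi.sub_apply, mulVec_diagonal, Finset.sum_mul]
  simp only [mulVec, dotProduct, of_apply, mul_sub, Finset.sum_sub_distrib]

theorem weightedLaplacian_mulVec_const [Ring R] (w : ι → ι → R) (a : R) :
    weightedLaplacian w *ᵥ (fun _ ↦ a) = 0 := by
  ext i
  simp [weightedLaplacian_mulVec]

theorem weightedLaplacian_transpose [Ring R] {w : ι → ι → R} (hw : ∀ i j, w i j = w j i) :
    (weightedLaplacian w)ᵀ = weightedLaplacian w := by
  rw [weightedLaplacian, transpose_sub, diagonal_transpose]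
  congr 1
  ext i j
  exact hw j i

theorem two_mul_dotProduct_weightedLaplacian_mulVec [CommRing R] {w : ι → ι → R}
    (hw : ∀ i j, w i j = w j i) (v : ι → R) :
    2 * (v ⬝ᵥ weightedLaplacian w *ᵥ v) = ∑ i, ∑ j, w i j * (v i - v j) ^ 2 := by
  have hswap : ∑ i, ∑ j, w i j * (v j * (v j - v i)) = ∑ i, ∑ j, w i j * (v i * (v i - v j)) := by
    rw [Finset.sum_comm]; simp only [hw]
  calc 2 * (v ⬝ᵥ weightedLaplacian w *ᵥ v)
      = ∑ i, ∑ j, w i j * (v i * (v i - v j)) + ∑ i, ∑ j, w i j * (v j * (v j - v i)) := by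
        rw [hswap, two_mul]
        simp only [dotProduct, weightedLaplacian_mulVec, Finset.mul_sum]
        congr! 3 <;> ring
    _ = ∑ i, ∑ j, w i j * (v i - v j) ^ 2 := by
        simp only [← Finset.sum_add_distrib]
        congr! 2; ring

section Real

variable {w : ι → ι → ℝ}

theorem isHermitian_weightedLaplacian (hw : ∀ i j, w i j = w j i) :
    (weightedLaplacian w).IsHermitian :=
  (conjTranspose_eq_transpose_of_trivial _).trans (weightedLaplacian_transpose hw)

theorem dotProduct_weightedLaplacian_mulVec_nonneg (hw : ∀ i j, w i j = w j i)
    (hnonneg : ∀ i j, i ≠ j → 0 ≤ w i j) (v : ι → ℝ) : 0 ≤ v ⬝ᵥ weightedLaplacian w *ᵥ v := by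
  have hterm := weight_mul_sq_sub_nonneg hnonneg v
  have h := two_mul_dotProduct_weightedLaplacian_mulVec hw v
  have : 0 ≤ ∑ i, ∑ j, w i j * (v i - v j) ^ 2 :=
    Fintype.sum_nonneg fun i ↦ Fintype.sum_nonneg (hterm i)
  linarith

theorem eq_of_dotProduct_weightedLaplacian_mulVec_eq_zero (hw : ∀ i j, w i j = w j i)
    (hpos : ∀ i j, i ≠ j → 0 < w i j) {v : ι → ℝ} (hv : v ⬝ᵥ weightedLaplacian w *ᵥ v = 0)
    (i j : ι) : v i = v j := by
  obtain rfl | hij := eq_or_ne i j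
  · rfl
  have hterm := weight_mul_sq_sub_nonneg (fun i j h ↦ (hpos i j h).le) v
  have hsum : ∑ i, ∑ j, w i j * (v i - v j) ^ 2 = 0 := by
    rw [← two_mul_dotProduct_weightedLaplacian_mulVec hw, hv, mul_zero]
  have hrow := (Fintype.sum_eq_zero_iff_of_nonneg fun i ↦ Fintype.sum_nonneg (hterm i)).1 hsum
  have hij0 := congrFun ((Fintype.sum_eq_zero_iff_of_nonneg (hterm i)).1 (congrFun hrow i)) j
  have hsq : (v i - v j) ^ 2 = 0 := (mul_eq_zero.1 hij0).resolve_left (hpos i j hij).ne'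
  exact sub_eq_zero.1 (pow_eq_zero_iff two_ne_zero |>.1 hsq)

theorem posDef_submatrix_weightedLaplacian [Fintype κ] (hw : ∀ i j, w i j = w j i)
    (hpos : ∀ i j, i ≠ j → 0 < w i j) {e : κ → ι} (he : Function.Injective e) {j₀ : ι}
    (hj₀ : j₀ ∉ Set.range e) : ((weightedLaplacian w).submatrix e e).PosDef := by
  rw [posDef_iff_dotProduct_mulVec]
  refine ⟨(isHermitian_weightedLaplacian hw).submatrix e, fun v hv ↦ ?_⟩
  rw [star_trivial, dotProduct_submatrix_mulVec _ he]
  refine (dotProduct_weightedLaplacian_mulVec_nonneg hw (fun i j h ↦ (hpos i j h).le)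
    _).lt_of_ne' fun hu ↦ hv (funext fun k ↦ ?_)
  calc v k = Function.extend e v 0 (e k) := (he.extend_apply v 0 k).symm
    _ = Function.extend e v 0 j₀ := eq_of_dotProduct_weightedLaplacian_mulVec_eq_zero hw hpos hu _ _
    _ = 0 := Function.extend_apply' _ _ _ (by simpa using hj₀)

theorem ker_mulVecLin_weightedLaplacian [Nonempty ι] (hw : ∀ i j, w i j = w j i)
    (hpos : ∀ i j, i ≠ j → 0 < w i j) :
    LinearMap.ker (weightedLaplacian w).mulVecLin = ℝ ∙ (fun _ ↦ 1) := by
  refine le_antisymm (fun v hv ↦ ?_) ?_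
  · have hform : v ⬝ᵥ weightedLaplacian w *ᵥ v = 0 := by
      rw [LinearMap.mem_ker, mulVecLin_apply] at hv
      rw [hv, dotProduct_zero]
    obtain ⟨i₀⟩ := ‹Nonempty ι›
    refine Submodule.mem_span_singleton.2 ⟨v i₀, funext fun i ↦ ?_⟩
    simp [eq_of_dotProduct_weightedLaplacian_mulVec_eq_zero hw hpos hform i i₀]
  · rw [Submodule.span_le, Set.singleton_subset_iff, SetLike.mem_coe, LinearMap.mem_ker,
      mulVecLin_apply, weightedLaplacian_mulVec_const]

theorem rank_weightedLaplacian [Nonempty ι] (hw : ∀ i j, w i j = w j i)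
    (hpos : ∀ i j, i ≠ j → 0 < w i j) : (weightedLaplacian w).rank = Fintype.card ι - 1 := by
  have h := LinearMap.finrank_range_add_finrank_ker (weightedLaplacian w).mulVecLin
  rw [ker_mulVecLin_weightedLaplacian hw hpos,
    finrank_span_singleton (Function.ne_iff.2 ⟨Classical.arbitrary ι, one_ne_zero⟩),
    Module.finrank_fintype_fun_eq_card] at h
  rw [rank]
  omega

end Real

end Matrix

theorem statement7_general (d : ℕ)
    (γ : Fin d → Fin d → ℝ)
    (hγsymm : ∀ i j, γ i j = γ j i)
    (hγpos : ∀ i j, i ≠ j → 0 < γ i j)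
    (c : (Fin d → ℝ) → Matrix (Fin d) (Fin d) ℝ)
    (hc : ∀ x i j, c x i j =
      if i = j then ∑ k ∈ Finset.univ.erase i, γ i k * x i * x k
      else -(γ i j * x i * x j))
    (x : Fin d → ℝ)
    (hx : (∀ i, 0 < x i ∧ x i < 1) ∧ (∑ i, x i) = 1) :
    ((c x).submatrix (Fin.castLE (Nat.sub_le d 1)) (Fin.castLE (Nat.sub_le d 1))).PosDef ∧
      (c x).rank = d - 1 := by
  obtain ⟨hxpos, hxsum⟩ := hx
  set w : Fin d → Fin d → ℝ := fun i j ↦ γ i j * x i * x j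
  have hcw : c x = weightedLaplacian w := by
    ext i j
    rw [hc, weightedLaplacian, Matrix.sub_apply, diagonal_apply, of_apply]
    split_ifs with hij
    · rw [hij, Finset.sum_erase_eq_sub (Finset.mem_univ j)]
    · rw [zero_sub]
  have hw : ∀ i j, w i j = w j i := fun i j ↦ by simp only [w, hγsymm i j]; ring
  have hwpos : ∀ i j, i ≠ j → 0 < w i j := fun i j hij ↦
    mul_pos (mul_pos (hγpos i j hij) (hxpos i).1) (hxpos j).1
  have hd : 0 < d := Nat.pos_of_ne_zero fun hd ↦ by subst hd; simp at hxsum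
  have : Nonempty (Fin d) := ⟨⟨0, hd⟩⟩
  rw [hcw, rank_weightedLaplacian hw hwpos, Fintype.card_fin]
  refine ⟨posDef_submatrix_weightedLaplacian hw hwpos (Fin.castLE_injective _)
    (j₀ := ⟨d - 1, by omega⟩) ?_, rfl⟩
  rintro ⟨k, hk⟩
  exact k.isLt.ne (Fin.ext_iff.1 hk)

/-- if `γ_{ij} > 0` for all `i ≠ j`, then for every `x` in the interior of the
unit simplex the matrix `c̃(x)` (i.e. `c(x)` with the `d`-th row and column deleted) is
positive definite and `c(x)` has rank `d − 1`. -/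
theorem statement7 (d : ℕ) (hd : 2 ≤ d)
    (γ : Fin d → Fin d → ℝ)
    (hγsymm : ∀ i j, γ i j = γ j i) (hγdiag : ∀ i, γ i i = 0)
    (hγpos : ∀ i j, i ≠ j → 0 < γ i j)
    (c : (Fin d → ℝ) → Matrix (Fin d) (Fin d) ℝ)
    (hc : ∀ x i j, c x i j =
      if i = j then ∑ k ∈ Finset.univ.erase i, γ i k * x i * x k
      else -(γ i j * x i * x j))
    (x : Fin d → ℝ)
    (hx : (∀ i, 0 < x i ∧ x i < 1) ∧ (∑ i, x i) = 1) :
    ((c x).submatrix (Fin.castLE (Nat.sub_le d 1)) (Fin.castLE (Nat.sub_le d 1))).PosDef ∧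
      (c x).rank = d - 1 :=
  statement7_general d γ hγsymm hγpos c hc x hx
end

section
/- Let d ≥ 2, let γ ∈ ℝ^{d×d} be symmetric with zero diagonal and γ_{ij} > 0 for all i ≠ j, and set γ* = min_{i≠j} γ_{ij}. Let x ∈ Δ̊^d and let b ∈ ℝ^d satisfy Σ_{i=1}^d b_i = 0, with b̃ ∈ ℝ^{d−1} denoting b with the d-th entry deleted. Then c̃(x) is invertible and b̃^⊤ c̃(x)^{−1} b̃ ≤ (1/γ*) Σ_{i=1}^d b_i² / x_i. -/
open Matrix Finset

/-- with `γ_{ij} > 0` for `i ≠ j` and `γ* = min_{i≠j} γ_{ij}`, for `x` in the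
interior of the unit simplex and `b` summing to zero, the truncated matrix `c̃(x)` is
invertible and `b̃^⊤ c̃(x)^{−1} b̃ ≤ (1/γ*) ∑_{i=1}^d b_i² / x_i`. -/
theorem statement12 (d : ℕ) (hd : 2 ≤ d)
    (γ : Fin d → Fin d → ℝ)
    (hγsymm : ∀ i j, γ i j = γ j i) (hγdiag : ∀ i, γ i i = 0)
    (hγpos : ∀ i j, i ≠ j → 0 < γ i j)
    (γstar : ℝ)
    (hγstar_le : ∀ i j, i ≠ j → γstar ≤ γ i j)
    (hγstar_mem : ∃ i j, i ≠ j ∧ γstar = γ i j)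
    (c : (Fin d → ℝ) → Matrix (Fin d) (Fin d) ℝ)
    (hc : ∀ x i j, c x i j =
      if i = j then ∑ k ∈ Finset.univ.erase i, γ i k * x i * x k
      else -(γ i j * x i * x j))
    (x : Fin d → ℝ)
    (hx : (∀ i, 0 < x i ∧ x i < 1) ∧ (∑ i, x i) = 1)
    (b : Fin d → ℝ) (hb : (∑ i, b i) = 0) :
    IsUnit ((c x).submatrix (Fin.castLE (Nat.sub_le d 1)) (Fin.castLE (Nat.sub_le d 1))).det ∧
      (fun k => b (Fin.castLE (Nat.sub_le d 1) k)) ⬝ᵥ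
          (((c x).submatrix (Fin.castLE (Nat.sub_le d 1)) (Fin.castLE (Nat.sub_le d 1)))⁻¹ *ᵥ
            (fun k => b (Fin.castLE (Nat.sub_le d 1) k))) ≤
        (1 / γstar) * ∑ i, (b i) ^ 2 / x i := by
  obtain ⟨n, rfl⟩ : ∃ n, d = n + 1 := ⟨d - 1, by omega⟩
  obtain ⟨hxpos, hxsum⟩ := hx
  set L := c x with hLdef
  -- basic entries
  have hLdiag : ∀ i, L i i = ∑ k ∈ Finset.univ.erase i, γ i k * x i * x k := by
    intro i; rw [hLdef, hc]; simp
  have hLoff : ∀ i j, i ≠ j → L i j = -(γ i j * x i * x j) := by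
    intro i j h; rw [hLdef, hc]; simp [h]
  have hLsymm : ∀ i j, L i j = L j i := by
    intro i j
    rcases eq_or_ne i j with rfl | h
    · rfl
    · rw [hLoff i j h, hLoff j i h.symm, hγsymm i j]; ring
  -- row sums vanish
  have hrow : ∀ i, ∑ j, L i j = 0 := by
    intro i
    rw [← Finset.add_sum_erase Finset.univ (fun j => L i j) (Finset.mem_univ i), hLdiag]
    rw [Finset.sum_congr rfl (fun j hj => hLoff i j (Finset.ne_of_mem_erase hj).symm)]
    rw [Finset.sum_neg_distrib]
    ring
  -- mulVec formula
  have hmul : ∀ (v : Fin (n+1) → ℝ) (i), (L *ᵥ v) i = ∑ j, γ i j * x i * x j * (v i - v j) := by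
    intro v i
    have hterm : ∀ j : Fin (n+1), L i j * v j = L i j * v i + γ i j * x i * x j * (v i - v j) := by
      intro j
      rcases eq_or_ne i j with rfl | h
      · simp
      · rw [hLoff i j h]; ring
    calc (L *ᵥ v) i = ∑ j, L i j * v j := rfl
      _ = ∑ j, (L i j * v i + γ i j * x i * x j * (v i - v j)) :=
          Finset.sum_congr rfl (fun j _ => hterm j)
      _ = (∑ j, L i j) * v i + ∑ j, γ i j * x i * x j * (v i - v j) := by
          rw [Finset.sum_add_distrib, Finset.sum_mul]
      _ = ∑ j, γ i j * x i * x j * (v i - v j) := by rw [hrow i]; ring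
  -- quadratic form as double sum
  have hS : ∀ v : Fin (n+1) → ℝ,
      v ⬝ᵥ (L *ᵥ v) = ∑ i, ∑ j, γ i j * x i * x j * (v i * (v i - v j)) := by
    intro v
    calc v ⬝ᵥ (L *ᵥ v) = ∑ i, v i * (L *ᵥ v) i := rfl
      _ = ∑ i, v i * ∑ j, γ i j * x i * x j * (v i - v j) :=
          Finset.sum_congr rfl (fun i _ => by rw [hmul])
      _ = ∑ i, ∑ j, γ i j * x i * x j * (v i * (v i - v j)) := by
          refine Finset.sum_congr rfl fun i _ => ?_
          rw [Finset.mul_sum]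
          exact Finset.sum_congr rfl fun j _ => by ring
  have hS2 : ∀ v : Fin (n+1) → ℝ,
      v ⬝ᵥ (L *ᵥ v) = ∑ i, ∑ j, γ i j * x i * x j * (v j * (v j - v i)) := by
    intro v
    rw [hS v, Finset.sum_comm]
    exact Finset.sum_congr rfl fun j _ => Finset.sum_congr rfl fun i _ => by
      rw [hγsymm i j]; ring
  have hquad : ∀ v : Fin (n+1) → ℝ,
      2 * (v ⬝ᵥ (L *ᵥ v)) = ∑ i, ∑ j, γ i j * x i * x j * (v i - v j)^2 := by
    intro v
    have h2 : 2 * (v ⬝ᵥ (L *ᵥ v)) =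
        (∑ i, ∑ j, γ i j * x i * x j * (v i * (v i - v j))) +
        (∑ i, ∑ j, γ i j * x i * x j * (v j * (v j - v i))) := by
      rw [← hS v, ← hS2 v]; ring
    rw [h2, ← Finset.sum_add_distrib]
    refine Finset.sum_congr rfl fun i _ => ?_
    rw [← Finset.sum_add_distrib]
    exact Finset.sum_congr rfl fun j _ => by ring
  -- restate goal with castSucc (definitionally equal)
  show IsUnit (L.submatrix Fin.castSucc Fin.castSucc).det ∧
      (fun k : Fin n => b (Fin.castSucc k)) ⬝ᵥ
          ((L.submatrix Fin.castSucc Fin.castSucc)⁻¹ *ᵥ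
            (fun k : Fin n => b (Fin.castSucc k))) ≤
        (1 / γstar) * ∑ i, (b i) ^ 2 / x i
  set A := L.submatrix (Fin.castSucc : Fin n → Fin (n+1)) Fin.castSucc with hAdef
  set bt : Fin n → ℝ := fun k => b (Fin.castSucc k) with hbtdef
  -- relating A and L via snoc extension
  have hLv : ∀ (u : Fin n → ℝ) (k : Fin n),
      (L *ᵥ (Fin.snoc u 0 : Fin (n+1) → ℝ)) (Fin.castSucc k) = (A *ᵥ u) k := by
    intro u k
    show (∑ j, L (Fin.castSucc k) j * (Fin.snoc u 0 : Fin (n+1) → ℝ) j) = ∑ j, A k j * u j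
    rw [Fin.sum_univ_castSucc]
    simp [hAdef, Fin.snoc_castSucc, Fin.snoc_last]
  have hq : ∀ u : Fin n → ℝ,
      u ⬝ᵥ (A *ᵥ u) = (Fin.snoc u 0 : Fin (n+1) → ℝ) ⬝ᵥ (L *ᵥ (Fin.snoc u 0 : Fin (n+1) → ℝ)) := by
    intro u
    show (∑ k, u k * (A *ᵥ u) k) =
      ∑ i, (Fin.snoc u 0 : Fin (n+1) → ℝ) i * (L *ᵥ (Fin.snoc u 0 : Fin (n+1) → ℝ)) i
    rw [Fin.sum_univ_castSucc]
    simp [Fin.snoc_castSucc, Fin.snoc_last, hLv]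
  -- positivity of the truncated quadratic form
  have hposQ : ∀ u : Fin n → ℝ, u ≠ 0 → 0 < u ⬝ᵥ (A *ᵥ u) := by
    intro u hu
    rw [hq u]
    set w : Fin (n+1) → ℝ := Fin.snoc u 0 with hw
    have h2 := hquad w
    have hterm_nonneg : ∀ i j : Fin (n+1), 0 ≤ γ i j * x i * x j * (w i - w j)^2 := by
      intro i j
      rcases eq_or_ne i j with rfl | h
      · simp
      · exact mul_nonneg (mul_nonneg (mul_nonneg (hγpos i j h).le (hxpos i).1.le)
          (hxpos j).1.le) (sq_nonneg _)
    obtain ⟨k, hk⟩ := Function.ne_iff.mp hu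
    have hlt : 0 < ∑ i, ∑ j, γ i j * x i * x j * (w i - w j)^2 := by
      apply Finset.sum_pos' (fun i _ => Finset.sum_nonneg fun j _ => hterm_nonneg i j)
      refine ⟨Fin.castSucc k, Finset.mem_univ _, ?_⟩
      apply Finset.sum_pos' (fun j _ => hterm_nonneg _ j)
      refine ⟨Fin.last n, Finset.mem_univ _, ?_⟩
      have hne : Fin.castSucc k ≠ Fin.last n := (Fin.castSucc_lt_last k).ne
      have hvv : w (Fin.castSucc k) - w (Fin.last n) = u k := by
        simp [hw, Fin.snoc_castSucc, Fin.snoc_last]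
      rw [hvv]
      have hsq : 0 < (u k)^2 := lt_of_le_of_ne (sq_nonneg _) (Ne.symm (pow_ne_zero 2 hk))
      exact mul_pos (mul_pos (mul_pos (hγpos _ _ hne) (hxpos _).1) (hxpos _).1) hsq
    linarith
  -- determinant is a unit
  have hdet : IsUnit A.det := by
    rw [isUnit_iff_ne_zero]
    intro h0
    obtain ⟨u, hu, hAu⟩ := Matrix.exists_mulVec_eq_zero_iff.mpr h0
    have hQ := hposQ u hu
    rw [hAu] at hQ
    simp at hQ
  refine ⟨hdet, ?_⟩
  -- main inequality
  set u : Fin n → ℝ := A⁻¹ *ᵥ bt with hudef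
  have hAu : A *ᵥ u = bt := by
    rw [hudef, Matrix.mulVec_mulVec, Matrix.mul_nonsing_inv A hdet, Matrix.one_mulVec]
  set v : Fin (n+1) → ℝ := Fin.snoc u 0 with hv
  -- column sums of L *ᵥ w vanish
  have hsumLv : ∀ w : Fin (n+1) → ℝ, ∑ i, (L *ᵥ w) i = 0 := by
    intro w
    calc ∑ i, (L *ᵥ w) i = ∑ i, ∑ j, L i j * w j := rfl
      _ = ∑ j, ∑ i, L i j * w j := Finset.sum_comm
      _ = 0 := by
          refine Finset.sum_eq_zero fun j _ => ?_
          rw [← Finset.sum_mul]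
          have hz : ∑ i, L i j = 0 := by
            rw [Finset.sum_congr rfl fun i _ => hLsymm i j]
            exact hrow j
          rw [hz, zero_mul]
  have hLvb : L *ᵥ v = b := by
    funext i
    induction i using Fin.lastCases with
    | cast k => rw [hv, hLv u k, hAu]
    | last =>
        have h1 := hsumLv v
        rw [Fin.sum_univ_castSucc] at h1
        have h2 : ∑ k : Fin n, (L *ᵥ v) (Fin.castSucc k) = ∑ k : Fin n, b (Fin.castSucc k) := by
          refine Finset.sum_congr rfl fun k _ => ?_
          rw [hv, hLv u k, hAu]
        have hbsum := hb
        rw [Fin.sum_univ_castSucc] at hbsum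
        rw [h2] at h1
        linarith
  set m : ℝ := ∑ i, x i * v i with hm
  set Q : ℝ := v ⬝ᵥ (L *ᵥ v) with hQdef
  set S : ℝ := ∑ i, (b i)^2 / x i with hSdef
  have hgoalQ : bt ⬝ᵥ u = Q := by
    rw [dotProduct_comm, ← hAu, hq u, ← hv, ← hQdef]
  -- Q as a centered sum
  have hQb : Q = ∑ i, b i * (v i - m) := by
    have e1 : ∑ i, b i * (v i - m) = (∑ i, b i * v i) - (∑ i, b i) * m := by
      rw [Finset.sum_mul, ← Finset.sum_sub_distrib]
      exact Finset.sum_congr rfl fun i _ => by ring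
    rw [e1, hb, zero_mul, sub_zero, hQdef, hLvb]
    exact Finset.sum_congr rfl fun i _ => mul_comm _ _
  -- variance identities
  have hxv2 : ∑ i, x i * (v i - m)^2 = (∑ i, x i * v i ^ 2) - m^2 := by
    have e : ∀ i : Fin (n+1), x i * (v i - m)^2
        = x i * v i ^ 2 - (x i * v i) * (2*m) + (m^2) * x i := fun i => by ring
    rw [Finset.sum_congr rfl fun i _ => e i, Finset.sum_add_distrib, Finset.sum_sub_distrib]
    have a1 : (∑ i, (x i * v i) * (2*m)) = m * (2 * m) := by
      rw [← Finset.sum_mul, ← hm]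
    have a2 : (∑ i : Fin (n+1), (m^2) * x i) = m^2 := by
      rw [← Finset.mul_sum, hxsum, mul_one]
    rw [a1, a2]
    ring
  have hinner : ∀ i : Fin (n+1), ∑ j, x i * x j * (v i - v j)^2
      = x i * v i ^ 2 - (x i * v i) * (2 * m) + x i * (∑ j, x j * v j ^ 2) := by
    intro i
    have e : ∀ j : Fin (n+1), x i * x j * (v i - v j)^2
        = (x i * v i ^ 2) * x j - (2 * (x i * v i)) * (x j * v j) + x i * (x j * v j ^ 2) :=
      fun j => by ring
    rw [Finset.sum_congr rfl fun j _ => e j, Finset.sum_add_distrib, Finset.sum_sub_distrib]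
    have a1 : (∑ j, (x i * v i ^ 2) * x j) = (x i * v i ^ 2) * 1 := by
      rw [← Finset.mul_sum, hxsum]
    have a2 : (∑ j, (2 * (x i * v i)) * (x j * v j)) = (2 * (x i * v i)) * m := by
      rw [← Finset.mul_sum, ← hm]
    have a3 : (∑ j, x i * (x j * v j ^ 2)) = x i * (∑ j, x j * v j ^ 2) := by
      rw [← Finset.mul_sum]
    rw [a1, a2, a3]
    ring
  have hVar2 : ∑ i, ∑ j, x i * x j * (v i - v j)^2 = 2 * (∑ i, x i * (v i - m)^2) := by
    rw [Finset.sum_congr rfl fun i _ => hinner i, hxv2,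
      Finset.sum_add_distrib, Finset.sum_sub_distrib]
    have a1 : (∑ i, (x i * v i) * (2*m)) = m * (2 * m) := by
      rw [← Finset.sum_mul, ← hm]
    have a2 : (∑ i, x i * (∑ j, x j * v j ^ 2)) = 1 * (∑ j, x j * v j ^ 2) := by
      rw [← Finset.sum_mul, hxsum]
    rw [a1, a2]
    ring
  -- Poincaré comparison
  have hcomp : γstar * (∑ i, ∑ j, x i * x j * (v i - v j)^2)
      ≤ ∑ i, ∑ j, γ i j * x i * x j * (v i - v j)^2 := by
    rw [Finset.mul_sum]
    refine Finset.sum_le_sum fun i _ => ?_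
    rw [Finset.mul_sum]
    refine Finset.sum_le_sum fun j _ => ?_
    rcases eq_or_ne i j with rfl | h
    · simp
    · have h1 : 0 ≤ x i * x j * (v i - v j)^2 :=
        mul_nonneg (mul_nonneg (hxpos i).1.le (hxpos j).1.le) (sq_nonneg _)
      calc γstar * (x i * x j * (v i - v j)^2)
          ≤ γ i j * (x i * x j * (v i - v j)^2) :=
            mul_le_mul_of_nonneg_right (hγstar_le i j h) h1
        _ = γ i j * x i * x j * (v i - v j)^2 := by ring
  have hVarnonneg : 0 ≤ ∑ i, x i * (v i - m)^2 :=
    Finset.sum_nonneg fun i _ => mul_nonneg (hxpos i).1.le (sq_nonneg _)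
  have hSnonneg : 0 ≤ S := by
    rw [hSdef]
    exact Finset.sum_nonneg fun i _ => div_nonneg (sq_nonneg _) (hxpos i).1.le
  have hγstarpos : 0 < γstar := by
    obtain ⟨i, j, hij, hstar⟩ := hγstar_mem
    rw [hstar]; exact hγpos i j hij
  have hPoin : γstar * (∑ i, x i * (v i - m)^2) ≤ Q := by
    have h2 := hquad v
    rw [← hQdef] at h2
    rw [hVar2] at hcomp
    linarith
  -- Cauchy–Schwarz
  have hCS : Q^2 ≤ S * (∑ i, x i * (v i - m)^2) := by
    have e1 : ∀ i : Fin (n+1),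
        b i / Real.sqrt (x i) * (Real.sqrt (x i) * (v i - m)) = b i * (v i - m) := by
      intro i
      have hs : Real.sqrt (x i) ≠ 0 := (Real.sqrt_pos.mpr (hxpos i).1).ne'
      field_simp
    have e2 : ∀ i : Fin (n+1), (b i / Real.sqrt (x i))^2 = (b i)^2 / x i := by
      intro i
      rw [div_pow, Real.sq_sqrt (hxpos i).1.le]
    have e3 : ∀ i : Fin (n+1), (Real.sqrt (x i) * (v i - m))^2 = x i * (v i - m)^2 := by
      intro i
      rw [mul_pow, Real.sq_sqrt (hxpos i).1.le]
    rw [hQb, hSdef]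
    calc (∑ i, b i * (v i - m))^2
        = (∑ i, (b i / Real.sqrt (x i)) * (Real.sqrt (x i) * (v i - m)))^2 := by
          congr 1
          exact Finset.sum_congr rfl fun i _ => (e1 i).symm
      _ ≤ (∑ i, (b i / Real.sqrt (x i))^2) * (∑ i, (Real.sqrt (x i) * (v i - m))^2) :=
          Finset.sum_mul_sq_le_sq_mul_sq _ _ _
      _ = (∑ i, (b i)^2 / x i) * (∑ i, x i * (v i - m)^2) := by
          rw [Finset.sum_congr rfl fun i _ => e2 i, Finset.sum_congr rfl fun i _ => e3 i]
  -- conclusion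
  rw [hgoalQ]
  rcases le_or_gt Q 0 with hQ | hQ
  · have : (0:ℝ) ≤ (1/γstar) * S := mul_nonneg (by positivity) hSnonneg
    linarith
  · have key : γstar * Q ≤ S := by
      nlinarith [mul_le_mul_of_nonneg_left hPoin hSnonneg,
        mul_le_mul_of_nonneg_left hCS hγstarpos.le]
    have : Q ≤ S / γstar := (le_div_iff₀ hγstarpos).mpr (by linarith)
    calc Q ≤ S / γstar := this
      _ = (1/γstar) * S := by ring
end
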